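/- arXiv:1408.1336 — 3 statements merged into one kernel-verified Lean document; each statement's English description precedes it below -/
import Mathlib

section
/- (Binary C-bound) Let D be a probability distribution on X × {−1,+1}, H a set of voters h : X → [−1,+1], and ρ a probability distribution on H. Define the margin M_ρ(x,y) = y · E_{h∼ρ}[h(x)] and the majority vote B_ρ(x) = sign(E_{h∼ρ}[h(x)]). If E_{(x,y)∼D}[M_ρ(x,y)] > 0, then the risk R_D(B_ρ) = P_{(x,y)∼D}(B_ρ(x) ≠ y) satisfies R_D(B_ρ) ≤ 1 − (E_{(x,y)∼D}[M_ρ(x,y)])² / E_{(x,y)∼D}[(M_ρ(x,y))²], provided that on the event of ties (E_{h∼ρ}h(x)=0) the majority vote is counted as an error. -/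
/-!
On a label `y = ±1` the vote `sign m` is wrong exactly when the margin `y * m` is `≤ 0`, so the
risk is `1 - P(M > 0)`. Since `M ≤ 0` off `A = {M > 0}`, Jensen's inequality for `x ↦ x²` on `A`
gives `(E M)² ≤ (∫_A M)² ≤ P(A) · E[M²]`, which rearranges to the C-bound.
-/

open MeasureTheory

lemma Real.sign_ne_iff_mul_nonpos {r y : ℝ} (hy : y = 1 ∨ y = -1) :
    Real.sign r ≠ y ↔ y * r ≤ 0 := by
  rcases hy with rfl | rfl <;> rcases lt_trichotomy r 0 with hr | rfl | hr <;>
    norm_num [Real.sign_of_neg, Real.sign_of_pos, *, le_of_lt, not_le_of_gt]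

section

variable {α : Type*} [MeasurableSpace α] {μ : Measure α} {f : α → ℝ}

lemma sq_integral_le_measureReal_univ_mul_integral_sq [IsFiniteMeasure μ] (hf : MemLp f 2 μ) :
    (∫ x, f x ∂μ) ^ 2 ≤ μ.real Set.univ * ∫ x, f x ^ 2 ∂μ := by
  rcases eq_zero_or_neZero μ with rfl | _
  · simp
  have hjensen : (⨍ x, f x ∂μ) ^ 2 ≤ ⨍ x, f x ^ 2 ∂μ :=
    (even_two.convexOn_pow (𝕜 := ℝ)).map_average_le (continuous_pow 2).continuousOn
      isClosed_univ (by simp) (hf.integrable one_le_two) hf.integrable_sq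
  have hmass : 0 < μ.real Set.univ := by simp
  rw [average_eq, average_eq, smul_eq_mul, smul_eq_mul, inv_mul_eq_div, inv_mul_eq_div, div_pow,
    div_le_div_iff₀ (by positivity) hmass, sq (μ.real _), ← mul_assoc] at hjensen
  exact le_of_mul_le_mul_right (by linarith) hmass

lemma integral_le_setIntegral_pos (hf : Integrable f μ) :
    ∫ x, f x ∂μ ≤ ∫ x in {x | 0 < f x}, f x ∂μ := by
  have hA : NullMeasurableSet {x | 0 < f x} μ :=
    aestronglyMeasurable_const.nullMeasurableSet_lt hf.aestronglyMeasurable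
  have hcompl : ∫ x in {x | 0 < f x}ᶜ, f x ∂μ ≤ 0 := by
    refine setIntegral_nonpos_of_ae_restrict ?_
    filter_upwards [ae_restrict_mem₀ hA.compl] with x hx
    simpa using hx
  linarith [integral_add_compl₀ hA hf]

lemma sq_integral_le_integral_sq_mul_measureReal_pos [IsFiniteMeasure μ] (hf : MemLp f 2 μ)
    (h0 : 0 ≤ ∫ x, f x ∂μ) :
    (∫ x, f x ∂μ) ^ 2 ≤ (∫ x, f x ^ 2 ∂μ) * μ.real {x | 0 < f x} := by
  set A := {x | 0 < f x}
  calc (∫ x, f x ∂μ) ^ 2 ≤ (∫ x in A, f x ∂μ) ^ 2 :=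
        pow_le_pow_left₀ h0 (integral_le_setIntegral_pos (hf.integrable one_le_two)) 2
    _ ≤ μ.real A * ∫ x in A, f x ^ 2 ∂μ := by
        simpa using sq_integral_le_measureReal_univ_mul_integral_sq (hf.restrict A)
    _ ≤ μ.real A * ∫ x, f x ^ 2 ∂μ := mul_le_mul_of_nonneg_left
        (setIntegral_le_integral hf.integrable_sq (.of_forall fun x => sq_nonneg _))
        measureReal_nonneg
    _ = (∫ x, f x ^ 2 ∂μ) * μ.real A := mul_comm _ _

lemma measureReal_nonpos_le_one_sub_sq_integral_div [IsProbabilityMeasure μ] (hf : MemLp f 2 μ)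
    (hpos : 0 < ∫ x, f x ∂μ) :
    μ.real {x | f x ≤ 0} ≤ 1 - (∫ x, f x ∂μ) ^ 2 / ∫ x, f x ^ 2 ∂μ := by
  have hA : NullMeasurableSet {x | 0 < f x} μ :=
    aestronglyMeasurable_const.nullMeasurableSet_lt hf.aestronglyMeasurable
  have hcompl : {x | f x ≤ 0} = {x | 0 < f x}ᶜ := by ext; simp
  have hCS := sq_integral_le_integral_sq_mul_measureReal_pos hf hpos.le
  have hsq : 0 < ∫ x, f x ^ 2 ∂μ := by
    by_contra! h
    nlinarith [measureReal_nonneg (μ := μ) (s := {x | 0 < f x})]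
  rw [hcompl, measureReal_compl₀ hA, probReal_univ, sub_le_sub_iff_left, div_le_iff₀ hsq]
  linarith

end

theorem binary_c_bound_general {X H : Type*} [MeasurableSpace X] [MeasurableSpace H]
    (D : Measure (X × ℝ)) [IsProbabilityMeasure D]
    (ρ : Measure H)
    (h : H → X → ℝ)
    (hlab : ∀ᵐ p ∂D, p.2 = 1 ∨ p.2 = -1)
    (hM : MemLp (fun p : X × ℝ => p.2 * ∫ θ, h θ p.1 ∂ρ) 2 D)
    (hpos : 0 < ∫ p, p.2 * (∫ θ, h θ p.1 ∂ρ) ∂D) :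
    (D {p : X × ℝ | Real.sign (∫ θ, h θ p.1 ∂ρ) ≠ p.2}).toReal ≤
      1 - (∫ p, p.2 * (∫ θ, h θ p.1 ∂ρ) ∂D) ^ 2 /
            ∫ p, (p.2 * (∫ θ, h θ p.1 ∂ρ)) ^ 2 ∂D := by
  have herr : D {p : X × ℝ | Real.sign (∫ θ, h θ p.1 ∂ρ) ≠ p.2}
      = D {p | p.2 * ∫ θ, h θ p.1 ∂ρ ≤ 0} := by
    refine measure_congr (Filter.eventuallyEq_set.mpr ?_)
    filter_upwards [hlab] with p hp
    exact Real.sign_ne_iff_mul_nonpos hp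
  rw [herr, ← measureReal_def]
  exact measureReal_nonpos_le_one_sub_sq_integral_div hM hpos

/-- Binary C-bound. -/
theorem binary_c_bound {X H : Type*} [MeasurableSpace X] [MeasurableSpace H]
    (D : Measure (X × ℝ)) [IsProbabilityMeasure D]
    (ρ : Measure H) [IsProbabilityMeasure ρ]
    (h : H → X → ℝ) (hbound : ∀ θ x, |h θ x| ≤ 1)
    (hint : ∀ x, Integrable (fun θ => h θ x) ρ)
    (hlab : ∀ᵐ p ∂D, p.2 = 1 ∨ p.2 = -1)
    (hM : MemLp (fun p : X × ℝ => p.2 * ∫ θ, h θ p.1 ∂ρ) 2 D)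
    (hpos : 0 < ∫ p, p.2 * (∫ θ, h θ p.1 ∂ρ) ∂D) :
    (D {p : X × ℝ | Real.sign (∫ θ, h θ p.1 ∂ρ) ≠ p.2}).toReal ≤
      1 - (∫ p, p.2 * (∫ θ, h θ p.1 ∂ρ) ∂D) ^ 2 /
            ∫ p, (p.2 * (∫ θ, h θ p.1 ∂ρ)) ^ 2 ∂D :=
  binary_c_bound_general D ρ h hlab hM hpos
end

section
/- (Multiclass 1/2-margin C-bound) In the multiclass setting, if E_{(x,y)∼D}[g_y(x) − 1/2] > 0, then R_D(B_ρ) ≤ 1 − (E_{(x,y)∼D}[g_y(x) − 1/2])² / E_{(x,y)∼D}[(g_y(x) − 1/2)²]. -/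
/-!
If `g_y(x) > 1/2` then, the scores summing to one, every other class scores below `1/2`, so the
vote is correct; hence an error forces the margin `M = g_y(x) - 1/2` to be `≤ 0`. For the
second-moment bound, `E[M] ≤ E[1_{M > 0} M]`, and Cauchy–Schwarz gives
`E[M]² ≤ P(M > 0) E[M²]`.
-/

open MeasureTheory

section SecondMoment

variable {Ω : Type*} [MeasurableSpace Ω] {μ : Measure Ω}

theorem sq_integral_mul_le_integral_sq_mul_integral_sq {f g : Ω → ℝ}
    (hf : MemLp f 2 μ) (hg : MemLp g 2 μ) :
    (∫ x, f x * g x ∂μ) ^ 2 ≤ (∫ x, f x ^ 2 ∂μ) * ∫ x, g x ^ 2 ∂μ := by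
  have holder := integral_mul_le_Lp_mul_Lq_of_nonneg Real.HolderConjugate.two_two
    (f := fun x => |f x|) (g := fun x => |g x|) (.of_forall fun x => abs_nonneg _)
    (.of_forall fun x => abs_nonneg _) (by rw [ENNReal.ofReal_ofNat]; exact hf.abs)
    (by rw [ENNReal.ofReal_ofNat]; exact hg.abs)
  simp only [Real.rpow_two, sq_abs, ← Real.sqrt_eq_rpow] at holder
  calc (∫ x, f x * g x ∂μ) ^ 2 = |∫ x, f x * g x ∂μ| ^ 2 := (sq_abs _).symm
    _ ≤ (∫ x, |f x| * |g x| ∂μ) ^ 2 := by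
        gcongr
        exact abs_integral_le_integral_abs.trans_eq (by simp only [abs_mul])
    _ ≤ (√(∫ x, f x ^ 2 ∂μ) * √(∫ x, g x ^ 2 ∂μ)) ^ 2 := by gcongr
    _ = (∫ x, f x ^ 2 ∂μ) * ∫ x, g x ^ 2 ∂μ := by
        rw [mul_pow, Real.sq_sqrt (integral_nonneg fun x => sq_nonneg _),
          Real.sq_sqrt (integral_nonneg fun x => sq_nonneg _)]

theorem sq_integral_le_measureReal_mul_integral_sq [IsFiniteMeasure μ] {f : Ω → ℝ} {s : Set Ω}
    (hs : MeasurableSet s) (hf : MemLp f 2 μ) (hf_int : 0 ≤ ∫ x, f x ∂μ)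
    (hf_compl : ∀ᵐ x ∂μ, x ∉ s → f x ≤ 0) :
    (∫ x, f x ∂μ) ^ 2 ≤ μ.real s * ∫ x, f x ^ 2 ∂μ := by
  have hs_memLp : MemLp (s.indicator 1) 2 μ := (memLp_const (1 : ℝ)).indicator hs
  have hf_le : ∫ x, f x ∂μ ≤ ∫ x, s.indicator 1 x * f x ∂μ := by
    refine integral_mono_ae (hf.integrable one_le_two) (hs_memLp.integrable_mul hf) ?_
    filter_upwards [hf_compl] with x hx
    by_cases hxs : x ∈ s <;> simp [hxs, hx]
  calc (∫ x, f x ∂μ) ^ 2 ≤ (∫ x, s.indicator 1 x * f x ∂μ) ^ 2 := by gcongr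
    _ ≤ (∫ x, s.indicator 1 x ^ 2 ∂μ) * ∫ x, f x ^ 2 ∂μ :=
        sq_integral_mul_le_integral_sq_mul_integral_sq hs_memLp hf
    _ = μ.real s * ∫ x, f x ^ 2 ∂μ := by
        congr 1
        rw [← integral_indicator_one hs]
        congr 1 with x
        by_cases hxs : x ∈ s <;> simp [hxs]

/-- If `∫ f ^ 2 = 0`, the quotient is `0` by Lean's division convention and the bound reads
`μ.real {x | f x ≤ 0} ≤ 1`. -/
theorem measureReal_nonpos_le_one_sub_sq_integral_div_integral_sq [IsProbabilityMeasure μ]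
    {f : Ω → ℝ} (hf : MemLp f 2 μ) (hf_int : 0 ≤ ∫ x, f x ∂μ) :
    μ.real {x | f x ≤ 0} ≤ 1 - (∫ x, f x ∂μ) ^ 2 / ∫ x, f x ^ 2 ∂μ := by
  set s := {x | 0 < hf.1.mk f x}
  have hs : MeasurableSet s :=
    measurableSet_lt measurable_const hf.1.stronglyMeasurable_mk.measurable
  have hf_compl : {x | f x ≤ 0} =ᵐ[μ] (sᶜ : Set Ω) := by
    filter_upwards [hf.1.ae_eq_mk] with x hx
    change (f x ≤ 0) = ¬ (0 < hf.1.mk f x)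
    rw [hx, not_lt]
  have key := sq_integral_le_measureReal_mul_integral_sq hs hf hf_int <| by
    filter_upwards [hf.1.ae_eq_mk] with x hx hxs
    exact hx ▸ not_lt.mp hxs
  rw [measureReal_congr hf_compl, probReal_compl_eq_one_sub hs, sub_le_sub_iff_left]
  exact div_le_of_le_mul₀ (integral_nonneg fun x => sq_nonneg _) measureReal_nonneg key

end SecondMoment

theorem apply_lt_of_one_half_lt {ι : Type*} [Fintype ι] {p : ι → ℝ} (hp : ∀ c, 0 ≤ p c)
    (hp_sum : ∑ c, p c ≤ 1) {y c : ι} (hy : 1 / 2 < p y) (hc : c ≠ y) : p c < p y := by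
  classical
  have : p c + p y ≤ 1 := by
    rw [← Finset.sum_pair hc]
    exact (Finset.sum_le_sum_of_subset_of_nonneg (Finset.subset_univ _)
      fun d _ _ => hp d).trans hp_sum
  linarith

theorem multiclass_half_margin_c_bound_general {X : Type*} [MeasurableSpace X] {Q : ℕ}
    (g : X → Fin Q → ℝ)
    (hsimplex : ∀ x, (∀ c, 0 ≤ g x c) ∧ (∑ c, g x c) = 1)
    (D : Measure (X × Fin Q)) [IsProbabilityMeasure D]
    (hM : MemLp (fun p : X × Fin Q => g p.1 p.2 - 1 / 2) 2 D)
    (hpos : 0 < ∫ p : X × Fin Q, (g p.1 p.2 - 1 / 2) ∂D) :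
    (D {p : X × Fin Q | ¬ ∀ c : Fin Q, c ≠ p.2 → g p.1 c < g p.1 p.2}).toReal ≤
      1 - (∫ p : X × Fin Q, (g p.1 p.2 - 1 / 2) ∂D) ^ 2 /
          ∫ p : X × Fin Q, (g p.1 p.2 - 1 / 2) ^ 2 ∂D := by
  have h_error : {p : X × Fin Q | ¬ ∀ c : Fin Q, c ≠ p.2 → g p.1 c < g p.1 p.2} ⊆
      {p | g p.1 p.2 - 1 / 2 ≤ 0} := by
    intro p hp
    show g p.1 p.2 - 1 / 2 ≤ 0
    by_contra! hmargin
    exact hp fun c hc =>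
      apply_lt_of_one_half_lt (hsimplex p.1).1 (hsimplex p.1).2.le (sub_pos.mp hmargin) hc
  exact (measureReal_mono h_error).trans
    (measureReal_nonpos_le_one_sub_sq_integral_div_integral_sq hM hpos.le)

/-- Multiclass 1/2-margin C-bound. -/
theorem multiclass_half_margin_c_bound {X : Type*} [MeasurableSpace X] {Q : ℕ}
    (hQ : 2 ≤ Q)
    (g : X → Fin Q → ℝ)
    (hsimplex : ∀ x, (∀ c, 0 ≤ g x c) ∧ (∑ c, g x c) = 1)
    (D : Measure (X × Fin Q)) [IsProbabilityMeasure D]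
    (hM : MemLp (fun p : X × Fin Q => g p.1 p.2 - 1 / 2) 2 D)
    (hpos : 0 < ∫ p : X × Fin Q, (g p.1 p.2 - 1 / 2) ∂D) :
    (D {p : X × Fin Q | ¬ ∀ c : Fin Q, c ≠ p.2 → g p.1 c < g p.1 p.2}).toReal ≤
      1 - (∫ p : X × Fin Q, (g p.1 p.2 - 1 / 2) ∂D) ^ 2 /
          ∫ p : X × Fin Q, (g p.1 p.2 - 1 / 2) ^ 2 ∂D :=
  multiclass_half_margin_c_bound_general g hsimplex D hM hpos
end

section
/- (Multilabel (Q−1)/Q-margin bound) Let Q ≥ 2, let Y = {−1/√Q, 1/√Q}^Q ⊂ ℝ^Q (so each y ∈ Y is a unit vector), and let g ∈ conv(Y). If ⟨g, y⟩ > (Q−1)/Q, then ⟨g, y⟩ > ⟨g, c⟩ for every c ∈ Y with c ≠ y. Consequently, in the multilabel setting, R_D(B_ρ) ≤ P_{(x,y)∼D}(⟨E_{h∼ρ}h(x), Y(y)⟩ − (Q−1)/Q ≤ 0). -/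
/-!
Every point `w` of the convex hull of the cube `{±r}^Q`, `r = 1/√Q`, has `|w j| ≤ r`, so each term
`w j * y j` is at most `1/Q`. A vertex `c ≠ y` flips the sign of `y` on a nonempty set `S` of
coordinates, hence `⟨w, y⟩ - ⟨w, c⟩ = 2 ∑_{j ∈ S} w j * y j`; the remaining at most `Q - 1` terms
contribute at most `(Q - 1)/Q`, so a margin above `(Q - 1)/Q` makes this difference positive.
-/

open MeasureTheory Finset

theorem abs_apply_le_of_mem_convexHull {ι : Type*} {V : Set (ι → ℝ)} {r : ℝ}
    (hV : ∀ v ∈ V, ∀ j, |v j| ≤ r) {w : ι → ℝ} (hw : w ∈ convexHull ℝ V) (j : ι) :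
    |w j| ≤ r := by
  have hsub : convexHull ℝ V ⊆ Set.univ.pi fun _ => Set.Icc (-r) r :=
    convexHull_min (fun v hv j _ => abs_le.mp (hV v hv j)) (convex_pi fun _ _ => convex_Icc _ _)
  exact abs_le.mpr (hsub hw j (Set.mem_univ j))

theorem Finset.sum_mul_lt_sum_mul_of_sign_flip {ι : Type*} [Fintype ι] {w y c : ι → ℝ} {b : ℝ}
    (hb : 0 ≤ b) (hwy : ∀ j, w j * y j ≤ b) (hc : ∀ j, c j = y j ∨ c j = -y j) (hcy : c ≠ y)
    (hmargin : (Fintype.card ι - 1) * b < ∑ j, w j * y j) :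
    ∑ j, w j * c j < ∑ j, w j * y j := by
  classical
  set S := univ.filter fun j => c j ≠ y j
  have hS : S.Nonempty := by
    obtain ⟨j, hj⟩ := Function.ne_iff.mp hcy
    exact ⟨j, mem_filter.mpr ⟨mem_univ j, hj⟩⟩
  have hdiff : ∑ j, w j * y j - ∑ j, w j * c j = 2 * ∑ j ∈ S, w j * y j := by
    rw [← sum_sub_distrib, mul_sum, sum_filter]
    refine sum_congr rfl fun j _ => ?_
    obtain h | h := hc j
    · simp [h]
    · by_cases hy : c j = y j
      · simp [hy]
      · rw [if_pos hy, h]; ring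
  have hcard : (#Sᶜ : ℝ) ≤ Fintype.card ι - 1 := by
    have hsum : (#Sᶜ + #S : ℝ) = Fintype.card ι := by exact_mod_cast card_compl_add_card S
    have hpos : (1 : ℝ) ≤ #S := by exact_mod_cast hS.card_pos
    linarith
  have hcompl : ∑ j ∈ Sᶜ, w j * y j ≤ (Fintype.card ι - 1) * b :=
    calc ∑ j ∈ Sᶜ, w j * y j ≤ #Sᶜ • b := sum_le_card_nsmul _ _ _ fun j _ => hwy j
      _ ≤ (Fintype.card ι - 1) * b := by rw [nsmul_eq_mul]; gcongr
  have hsplit := sum_add_sum_compl S fun j => w j * y j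
  linarith

theorem sum_mul_lt_sum_mul_of_mem_convexHull {ι : Type*} [Fintype ι] {V : Set (ι → ℝ)} {r : ℝ}
    (hV : ∀ v ∈ V, ∀ j, |v j| = r) {w y c : ι → ℝ} (hw : w ∈ convexHull ℝ V) (hy : y ∈ V)
    (hc : c ∈ V) (hcy : c ≠ y) (hmargin : (Fintype.card ι - 1) * (r * r) < ∑ j, w j * y j) :
    ∑ j, w j * c j < ∑ j, w j * y j := by
  have hterm (j : ι) : w j * y j ≤ r * r :=
    calc w j * y j ≤ |w j| * |y j| := (le_abs_self _).trans (abs_mul _ _).le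
      _ ≤ r * |y j| := mul_le_mul_of_nonneg_right
        (abs_apply_le_of_mem_convexHull (fun v hv j => (hV v hv j).le) hw j) (abs_nonneg _)
      _ = r * r := by rw [hV y hy j]
  exact sum_mul_lt_sum_mul_of_sign_flip (mul_self_nonneg r) hterm
    (fun j => abs_eq_abs.mp ((hV c hc j).trans (hV y hy j).symm)) hcy hmargin

theorem multilabel_margin_bound_general {X : Type*} [MeasurableSpace X] {Q : ℕ}
    (V : Set (Fin Q → ℝ))
    (hV : V = {v | ∀ j, v j = 1 / Real.sqrt Q ∨ v j = -(1 / Real.sqrt Q)})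
    (g : X → Fin Q → ℝ) (hg : ∀ x, g x ∈ convexHull ℝ V)
    (D : Measure (X × (Fin Q → ℝ)))
    (hlab : ∀ᵐ p ∂D, p.2 ∈ V) :
    (∀ w ∈ convexHull ℝ V, ∀ y ∈ V, ((Q : ℝ) - 1) / Q < (∑ j, w j * y j) →
        ∀ c ∈ V, c ≠ y → (∑ j, w j * c j) < ∑ j, w j * y j) ∧
    D {p : X × (Fin Q → ℝ) |
        ¬ ∀ c ∈ V, c ≠ p.2 → (∑ j, g p.1 j * c j) < ∑ j, g p.1 j * p.2 j} ≤
      D {p : X × (Fin Q → ℝ) | (∑ j, g p.1 j * p.2 j) - ((Q : ℝ) - 1) / Q ≤ 0} := by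
  set r := 1 / Real.sqrt Q
  have habs : ∀ v ∈ V, ∀ j, |v j| = r := by
    intro v hv j
    rw [hV] at hv
    rcases hv j with h | h <;> simp [h, r]
  have hrr : r * r = 1 / Q := by
    rw [div_mul_div_comm, one_mul, Real.mul_self_sqrt (Nat.cast_nonneg Q)]
  have hmargin : ∀ w ∈ convexHull ℝ V, ∀ y ∈ V, ((Q : ℝ) - 1) / Q < (∑ j, w j * y j) →
      ∀ c ∈ V, c ≠ y → (∑ j, w j * c j) < ∑ j, w j * y j := by
    intro w hw y hy hwy c hc hcy
    refine sum_mul_lt_sum_mul_of_mem_convexHull habs hw hy hc hcy ?_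
    rwa [Fintype.card_fin, hrr, ← div_eq_mul_one_div]
  refine ⟨hmargin, measure_mono_ae ?_⟩
  filter_upwards [hlab] with p hp hnot
  change _ - _ ≤ (0 : ℝ)
  by_contra! hpos
  exact hnot (hmargin _ (hg p.1) _ hp (sub_pos.mp hpos))

/-- Multilabel (Q−1)/Q-margin bound. -/
theorem multilabel_margin_bound {X : Type*} [MeasurableSpace X] {Q : ℕ} (hQ : 2 ≤ Q)
    (V : Set (Fin Q → ℝ))
    (hV : V = {v | ∀ j, v j = 1 / Real.sqrt Q ∨ v j = -(1 / Real.sqrt Q)})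
    (g : X → Fin Q → ℝ) (hg : ∀ x, g x ∈ convexHull ℝ V)
    (D : Measure (X × (Fin Q → ℝ))) [IsProbabilityMeasure D]
    (hlab : ∀ᵐ p ∂D, p.2 ∈ V) :
    (∀ w ∈ convexHull ℝ V, ∀ y ∈ V, ((Q : ℝ) - 1) / Q < (∑ j, w j * y j) →
        ∀ c ∈ V, c ≠ y → (∑ j, w j * c j) < ∑ j, w j * y j) ∧
    D {p : X × (Fin Q → ℝ) |
        ¬ ∀ c ∈ V, c ≠ p.2 → (∑ j, g p.1 j * c j) < ∑ j, g p.1 j * p.2 j} ≤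
      D {p : X × (Fin Q → ℝ) | (∑ j, g p.1 j * p.2 j) - ((Q : ℝ) - 1) / Q ≤ 0} :=
  multilabel_margin_bound_general V hV g hg D hlab
end
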